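/- Let f : ℝⁿ → ℝ be three times continuously differentiable, μ-strongly convex (μ > 0) and M-self-concordant (M > 0). Let x_k ∈ ℝⁿ, g_k := ∇f(x_k), and let d_k ∈ ℝⁿ be a descent direction with g_kᵀd_k < 0. Set η_k := −g_kᵀd_k/‖d_k‖_{x_k}, t_k := η_k/((1 + Mη_k)‖d_k‖_{x_k}), and x_{k+1} := x_k + t_k d_k. Then: (i) f(x_{k+1}) ≤ f(x_k) − ω(Mη_k)/M²; (ii) f(x_{k+1}) − f(x_k) ≤ (1/2) t_k g_kᵀd_k; (iii) (2Mη_k/(1 + 2Mη_k)) g_kᵀd_k ≤ ∇f(x_{k+1})ᵀd_k ≤ 0. -/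

import Mathlib

noncomputable section

open scoped BigOperators Classical

/-- Vectors in `ℝⁿ` with the Euclidean norm. -/
abbrev V (n : ℕ) := EuclideanSpace ℝ (Fin n)

/-- The Euclidean dot product `uᵀv`. -/
def dot {n : ℕ} (u v : V n) : ℝ := ∑ i, u i * v i

/-- The Hessian quadratic form `dᵀ∇²f(x)d`. -/
def hessQ {n : ℕ} (f : V n → ℝ) (x d : V n) : ℝ := iteratedFDeriv ℝ 2 f x ![d, d]

/-- The weighted norm `‖d‖ₓ = (dᵀ∇²f(x)d)^{1/2}`. -/
def wnorm {n : ℕ} (f : V n → ℝ) (x d : V n) : ℝ := Real.sqrt (hessQ f x d)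

/-- `f` is `μ`-strongly convex. -/
def StrongConvex {n : ℕ} (μ : ℝ) (f : V n → ℝ) : Prop :=
  ∀ x y : V n, ∀ l : ℝ, 0 ≤ l → l ≤ 1 →
    f (l • x + (1 - l) • y) ≤ l * f x + (1 - l) * f y - l * (1 - l) * μ / 2 * ‖x - y‖ ^ 2

/-- `f` has `L`-Lipschitz continuous gradient. -/
def LipschitzGrad {n : ℕ} (L : ℝ) (f : V n → ℝ) : Prop :=
  ∀ x y : V n, ‖gradient f x - gradient f y‖ ≤ L * ‖x - y‖

/-- `f` is `M`-self-concordant: `|D³f(x)[d,d,d]| ≤ 2M (dᵀ∇²f(x)d)^{3/2}`. -/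
def SelfConcordant {n : ℕ} (M : ℝ) (f : V n → ℝ) : Prop :=
  ∀ x d : V n, |iteratedFDeriv ℝ 3 f x ![d, d, d]| ≤ 2 * M * hessQ f x d ^ ((3 : ℝ) / 2)

/-- `f` has `L₂`-Lipschitz continuous Hessian. -/
def LipschitzHessian {n : ℕ} (L₂ : ℝ) (f : V n → ℝ) : Prop :=
  ∀ x y : V n, ‖iteratedFDeriv ℝ 2 f x - iteratedFDeriv ℝ 2 f y‖ ≤ L₂ * ‖x - y‖

/-- `ω(z) = z - ln(1+z)`. -/
def omegaFn (z : ℝ) : ℝ := z - Real.log (1 + z)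

/-- `ω⋆(z) = -z - ln(1-z)`. -/
def omegaStar (z : ℝ) : ℝ := -z - Real.log (1 - z)

/-- Matrix–vector multiplication acting on Euclidean space. -/
def mulv {n : ℕ} (A : Matrix (Fin n) (Fin n) ℝ) (v : V n) : V n :=
  (EuclideanSpace.equiv (Fin n) ℝ).symm (A.mulVec (EuclideanSpace.equiv (Fin n) ℝ v))

/-- `g_k = ∇f(x_k)`. -/
def gvec {n : ℕ} (f : V n → ℝ) (x : ℕ → V n) (k : ℕ) : V n := gradient f (x k)

/-- `d_k = -B_k⁻¹ g_k`. -/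
def dvec {n : ℕ} (f : V n → ℝ) (x : ℕ → V n) (B : ℕ → Matrix (Fin n) (Fin n) ℝ) (k : ℕ) : V n :=
  -(mulv (B k)⁻¹ (gvec f x k))

/-- `η_k = -g_kᵀd_k / ‖d_k‖_{x_k}`. -/
def etaSeq {n : ℕ} (f : V n → ℝ) (x : ℕ → V n) (B : ℕ → Matrix (Fin n) (Fin n) ℝ) (k : ℕ) : ℝ :=
  -(dot (gvec f x k) (dvec f x B k)) / wnorm f (x k) (dvec f x B k)

/-- The adaptive step size `t_k = η_k / ((1 + M η_k) ‖d_k‖_{x_k})`. -/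
def tSeq {n : ℕ} (f : V n → ℝ) (M : ℝ) (x : ℕ → V n) (B : ℕ → Matrix (Fin n) (Fin n) ℝ)
    (k : ℕ) : ℝ :=
  etaSeq f x B k / ((1 + M * etaSeq f x B k) * wnorm f (x k) (dvec f x B k))

/-- `s_k = x_{k+1} - x_k`. -/
def svec {n : ℕ} (x : ℕ → V n) (k : ℕ) : V n := x (k + 1) - x k

/-- `y_k = g_{k+1} - g_k`. -/
def yvec {n : ℕ} (f : V n → ℝ) (x : ℕ → V n) (k : ℕ) : V n := gvec f x (k + 1) - gvec f x k

/-- The outer product `u vᵀ`. -/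
def outer {n : ℕ} (u v : V n) : Matrix (Fin n) (Fin n) ℝ := Matrix.of fun i j => u i * v j

/-- The adaptive BFGS method (Algorithm 1). -/
structure AdaptiveBFGS {n : ℕ} (f : V n → ℝ) (M : ℝ) (x : ℕ → V n)
    (B : ℕ → Matrix (Fin n) (Fin n) ℝ) : Prop where
  posdef : (B 0).PosDef
  step : ∀ k, x (k + 1) = x k + tSeq f M x B k • dvec f x B k
  update : ∀ k, B (k + 1) =
    B k - (dot (svec x k) (mulv (B k) (svec x k)))⁻¹ • (B k * outer (svec x k) (svec x k) * B k)
      + (dot (yvec f x k) (svec x k))⁻¹ • outer (yvec f x k) (yvec f x k)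

/-- `α_k = ‖d_k‖_{x_k} / (√L ‖d_k‖)`. -/
def alphaSeq {n : ℕ} (f : V n → ℝ) (L : ℝ) (x : ℕ → V n) (B : ℕ → Matrix (Fin n) (Fin n) ℝ)
    (k : ℕ) : ℝ :=
  wnorm f (x k) (dvec f x B k) / (Real.sqrt L * ‖dvec f x B k‖)

/-- The smoothness aided adaptive step size `t̃_k`. -/
def ttSeq {n : ℕ} (f : V n → ℝ) (M L : ℝ) (x : ℕ → V n) (B : ℕ → Matrix (Fin n) (Fin n) ℝ)
    (k : ℕ) : ℝ :=
  if (1 + M * etaSeq f x B k) * alphaSeq f L x B k ≤ 1 then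
    etaSeq f x B k / ((1 + M * etaSeq f x B k) * wnorm f (x k) (dvec f x B k))
  else
    (M * etaSeq f x B k * alphaSeq f L x B k ^ 2 + (1 - alphaSeq f L x B k) ^ 2)
      / (M * wnorm f (x k) (dvec f x B k))

/-- The smoothness aided adaptive BFGS method SA²-BFGS (Algorithm 3). -/
structure SA2BFGS {n : ℕ} (f : V n → ℝ) (M L : ℝ) (x : ℕ → V n)
    (B : ℕ → Matrix (Fin n) (Fin n) ℝ) : Prop where
  posdef : (B 0).PosDef
  step : ∀ k, x (k + 1) = x k + ttSeq f M L x B k • dvec f x B k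
  update : ∀ k, B (k + 1) =
    B k - (dot (svec x k) (mulv (B k) (svec x k)))⁻¹ • (B k * outer (svec x k) (svec x k) * B k)
      + (dot (yvec f x k) (svec x k))⁻¹ • outer (yvec f x k) (yvec f x k)

/-- The positive semidefinite square root of a positive semidefinite matrix
(the former `Matrix.PosSemidef.sqrt`, spelled out with its old definition). -/
def psdSqrt {n : ℕ} {P : Matrix (Fin n) (Fin n) ℝ} (hA : P.PosSemidef) : Matrix (Fin n) (Fin n) ℝ :=
  (hA.1.eigenvectorUnitary : Matrix (Fin n) (Fin n) ℝ) *
    Matrix.diagonal (Real.sqrt ∘ hA.1.eigenvalues) *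
    (star hA.1.eigenvectorUnitary : Matrix (Fin n) (Fin n) ℝ)

/-- `ĝ_k = P^{-1/2} g_k`. -/
def hatg {n : ℕ} (f : V n → ℝ) (x : ℕ → V n) (P : Matrix (Fin n) (Fin n) ℝ) (hP : P.PosDef)
    (k : ℕ) : V n :=
  mulv (psdSqrt hP.posSemidef)⁻¹ (gvec f x k)

/-- `ŝ_k = P^{1/2} s_k`. -/
def hats {n : ℕ} (x : ℕ → V n) (P : Matrix (Fin n) (Fin n) ℝ) (hP : P.PosDef) (k : ℕ) : V n :=
  mulv (psdSqrt hP.posSemidef) (svec x k)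

/-- `ŷ_k = P^{-1/2} y_k`. -/
def haty {n : ℕ} (f : V n → ℝ) (x : ℕ → V n) (P : Matrix (Fin n) (Fin n) ℝ) (hP : P.PosDef)
    (k : ℕ) : V n :=
  mulv (psdSqrt hP.posSemidef)⁻¹ (yvec f x k)

/-- `cos θ̂_k = -ĝ_kᵀŝ_k / (‖ĝ_k‖ ‖ŝ_k‖)`. -/
def cosθ {n : ℕ} (f : V n → ℝ) (x : ℕ → V n) (P : Matrix (Fin n) (Fin n) ℝ) (hP : P.PosDef)
    (k : ℕ) : ℝ :=
  -(dot (hatg f x P hP k) (hats x P hP k)) / (‖hatg f x P hP k‖ * ‖hats x P hP k‖)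

/-- `m̂_k = ŷ_kᵀŝ_k / ‖ŝ_k‖²`. -/
def mhat {n : ℕ} (f : V n → ℝ) (x : ℕ → V n) (P : Matrix (Fin n) (Fin n) ℝ) (hP : P.PosDef)
    (k : ℕ) : ℝ :=
  dot (haty f x P hP k) (hats x P hP k) / ‖hats x P hP k‖ ^ 2

/-- `q̂_k = ‖ĝ_k‖² / (f(x_k) - f(x*))`. -/
def qhat {n : ℕ} (f : V n → ℝ) (x : ℕ → V n) (xstar : V n) (P : Matrix (Fin n) (Fin n) ℝ)
    (hP : P.PosDef) (k : ℕ) : ℝ :=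
  ‖hatg f x P hP k‖ ^ 2 / (f (x k) - f xstar)

/-- The potential function `Ψ(A) = tr(A) - ln det(A) - n`. -/
def Psi {n : ℕ} (A : Matrix (Fin n) (Fin n) ℝ) : ℝ := A.trace - Real.log A.det - n

/-- The Hessian matrix `∇²f(x)` in the standard basis. -/
def hessMatrix {n : ℕ} (f : V n → ℝ) (x : V n) : Matrix (Fin n) (Fin n) ℝ :=
  Matrix.of fun i j =>
    iteratedFDeriv ℝ 2 f x ![EuclideanSpace.single i (1 : ℝ), EuclideanSpace.single j (1 : ℝ)]

/-!
Along the line `s ↦ x_k + s • d_k` put `φ s = f (x_k + s • d_k)`. Strong convexity makes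
`φ'' > 0`, and self-concordance says precisely that `s ↦ φ'' s ^ (-1/2)` is `M`-Lipschitz; with
`r = ‖d_k‖_{x_k}` this gives `r² / (1 + M r s)² ≤ φ'' s ≤ r² / (1 - M r s)²` for
`0 ≤ s < 1 / (M r)`. Integrating once and twice bounds `φ'` and `φ` by explicit functions, and at
the step `t_k`, where `M r t_k = M η_k / (1 + M η_k)`, these bounds evaluate to (iii) and (i).
Part (ii) follows from (i) because `ω z ≥ z² / (2 (1 + z))`, which is `log y ≤ sinh (log y)` at
`y = 1 + z`.
-/

open Set

theorem dot_gradient {n : ℕ} (f : V n → ℝ) (x v : V n) :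
    dot (gradient f x) v = fderiv ℝ f x v := by
  rw [gradient, ← InnerProductSpace.toDual_symm_apply (𝕜 := ℝ), dot, PiLp.inner_apply]
  simp [mul_comm]

theorem hasDerivAt_iteratedFDeriv_line {E F : Type*} [NormedAddCommGroup E] [NormedSpace ℝ E]
    [NormedAddCommGroup F] [NormedSpace ℝ F] {f : E → F} {N : WithTop ℕ∞} {k : ℕ}
    (hf : ContDiff ℝ N f) (hk : k < N) (x d : E) (s : ℝ) :
    HasDerivAt (fun s : ℝ => iteratedFDeriv ℝ k f (x + s • d) fun _ => d)
      (iteratedFDeriv ℝ (k + 1) f (x + s • d) fun _ => d) s := by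
  have hline : HasDerivAt (fun s : ℝ => x + s • d) d s := by
    simpa using ((hasDerivAt_id s).smul_const d).const_add x
  have hk' :=
    ((hf.differentiable_iteratedFDeriv hk) (x + s • d)).hasFDerivAt.comp_hasDerivAt s hline
  exact (ContinuousMultilinearMap.apply ℝ (fun _ : Fin k => E) F fun _ => d).hasFDerivAt
    |>.comp_hasDerivAt s hk'

theorem hessQ_eq_iteratedFDeriv {n : ℕ} (f : V n → ℝ) (x d : V n) :
    hessQ f x d = iteratedFDeriv ℝ 2 f x fun _ => d := by
  rw [hessQ]
  congr
  ext i : 1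
  fin_cases i <;> rfl

theorem SelfConcordant.abs_iteratedFDeriv_three_le {n : ℕ} {M : ℝ} {f : V n → ℝ}
    (hself : SelfConcordant M f) (x d : V n) (hq : 0 ≤ hessQ f x d) :
    |iteratedFDeriv ℝ 3 f x fun _ => d| ≤ 2 * M * √(hessQ f x d) ^ 3 := by
  have h := hself x d
  rwa [show ![d, d, d] = fun _ => d by ext i : 1; fin_cases i <;> rfl, Real.sqrt_eq_rpow,
    ← Real.rpow_natCast, ← Real.rpow_mul hq, show (1 / 2 : ℝ) * (3 : ℕ) = 3 / 2 by norm_num] at *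

theorem StrongConvex.convexOn_line {n : ℕ} {μ : ℝ} {f : V n → ℝ} (hsc : StrongConvex μ f)
    (x d : V n) : ConvexOn ℝ univ fun s : ℝ => f (x + s • d) - μ * ‖d‖ ^ 2 / 2 * s ^ 2 := by
  refine ⟨convex_univ, fun a _ b _ l m hl _ hlm => ?_⟩
  obtain rfl : m = 1 - l := by linarith
  have hpt : l • (x + a • d) + (1 - l) • (x + b • d) = x + (l • a + (1 - l) • b) • d := by
    simp only [smul_eq_mul]; module
  have hdist : ‖(x + a • d) - (x + b • d)‖ ^ 2 = (a - b) ^ 2 * ‖d‖ ^ 2 := by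
    rw [show (x + a • d) - (x + b • d) = (a - b) • d by module, norm_smul, mul_pow,
      Real.norm_eq_abs, sq_abs]
  have h := hsc (x + a • d) (x + b • d) l hl (by linarith)
  rw [hpt, hdist] at h
  simp only [smul_eq_mul] at h ⊢
  nlinarith [h]

theorem ConvexOn.nonneg_of_hasDerivAt {g g' : ℝ → ℝ} {a x : ℝ} (hconv : ConvexOn ℝ univ g)
    (hg : ∀ s, HasDerivAt g (g' s) s) (hg' : HasDerivAt g' a x) : 0 ≤ a := by
  have hmono : Monotone g' := by
    have := hconv.monotoneOn_deriv fun s _ => (hg s).differentiableAt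
    rwa [monotoneOn_univ, show deriv g = g' from funext fun s => (hg s).deriv] at this
  simpa only [hg'.deriv] using hmono.deriv_nonneg (x := x)

theorem StrongConvex.mul_sq_norm_le_hessQ {n : ℕ} {μ : ℝ} {f : V n → ℝ} (hsc : StrongConvex μ f)
    (hf : ContDiff ℝ 2 f) (x d : V n) : μ * ‖d‖ ^ 2 ≤ hessQ f x d := by
  have h₁ : ∀ s : ℝ, HasDerivAt (fun s => f (x + s • d) - μ * ‖d‖ ^ 2 / 2 * s ^ 2)
      ((iteratedFDeriv ℝ 1 f (x + s • d) fun _ => d) - μ * ‖d‖ ^ 2 * s) s := by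
    intro s
    have h := (hasDerivAt_iteratedFDeriv_line hf (k := 0) (by norm_num) x d s).fun_sub
      ((hasDerivAt_pow 2 s).const_mul (μ * ‖d‖ ^ 2 / 2))
    simp only [iteratedFDeriv_zero_apply] at h
    refine h.congr_deriv ?_
    congr 1
    norm_num
    ring
  have h₂ := (hasDerivAt_iteratedFDeriv_line hf (k := 1) (by norm_num) x d 0).sub
    ((hasDerivAt_id' 0).const_mul (μ * ‖d‖ ^ 2))
  have := (hsc.convexOn_line x d).nonneg_of_hasDerivAt h₁ h₂
  rw [hessQ_eq_iteratedFDeriv]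
  simpa using this

theorem sq_div_two_mul_one_add_le_omegaFn {z : ℝ} (hz : 0 ≤ z) :
    z ^ 2 / (2 * (1 + z)) ≤ omegaFn z := by
  have h := Real.self_le_sinh_iff.2 (Real.log_nonneg (by linarith : (1 : ℝ) ≤ 1 + z))
  rw [Real.sinh_log (by linarith)] at h
  rw [omegaFn]
  have : ((1 + z) - (1 + z)⁻¹) / 2 = z - z ^ 2 / (2 * (1 + z)) := by
    field_simp
    ring
  linarith

theorem hasDerivAt_omegaStar {w : ℝ} (hw : w ≠ 1) : HasDerivAt omegaStar ((1 - w)⁻¹ - 1) w := by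
  have h := (hasDerivAt_id' w).fun_neg.fun_sub
    (((hasDerivAt_id' w).const_sub 1).log (sub_ne_zero.2 hw.symm))
  refine h.congr_deriv ?_
  field_simp
  ring

theorem le_of_hasDerivAt_le {f g f' g' : ℝ → ℝ} {a b : ℝ} (hab : a ≤ b)
    (hf : ∀ x ∈ Icc a b, HasDerivAt f (f' x) x) (hg : ∀ x ∈ Icc a b, HasDerivAt g (g' x) x)
    (ha : f a ≤ g a) (hfg : ∀ x ∈ Ico a b, f' x ≤ g' x) : f b ≤ g b :=
  image_le_of_deriv_right_le_deriv_boundary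
    (fun x hx => (hf x hx).continuousAt.continuousWithinAt)
    (fun x hx => (hf x (Ico_subset_Icc_self hx)).hasDerivWithinAt) ha
    (fun x hx => (hg x hx).continuousAt.continuousWithinAt)
    (fun x hx => (hg x (Ico_subset_Icc_self hx)).hasDerivWithinAt) hfg ⟨hab, le_rfl⟩

namespace SelfConcordantLine

variable {φ φ₁ φ₂ φ₃ : ℝ → ℝ} {M r s : ℝ}

theorem abs_inv_sqrt_sub_le (h₃ : ∀ s, HasDerivAt φ₂ (φ₃ s) s) (hpos : ∀ s, 0 < φ₂ s)
    (hsc : ∀ s, |φ₃ s| ≤ 2 * M * √(φ₂ s) ^ 3) (hs : 0 ≤ s) :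
    |(√(φ₂ s))⁻¹ - (√(φ₂ 0))⁻¹| ≤ M * s := by
  have hsqrt : ∀ u, 0 < √(φ₂ u) := fun u => Real.sqrt_pos.2 (hpos u)
  have hderiv : ∀ u, HasDerivAt (fun u => (√(φ₂ u))⁻¹)
      (-(1 / (2 * √(φ₂ u)) * φ₃ u) / √(φ₂ u) ^ 2) u := fun u =>
    ((Real.hasDerivAt_sqrt (hpos u).ne').comp u (h₃ u)).inv (hsqrt u).ne'
  have hbound : ∀ u, ‖-(1 / (2 * √(φ₂ u)) * φ₃ u) / √(φ₂ u) ^ 2‖ ≤ M := by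
    intro u
    have := hsqrt u
    rw [Real.norm_eq_abs, abs_div, abs_neg, abs_mul,
      abs_of_pos (by positivity : 0 < 1 / (2 * √(φ₂ u))),
      abs_of_pos (by positivity : 0 < √(φ₂ u) ^ 2), div_le_iff₀ (by positivity)]
    calc 1 / (2 * √(φ₂ u)) * |φ₃ u| ≤ 1 / (2 * √(φ₂ u)) * (2 * M * √(φ₂ u) ^ 3) := by
          gcongr
          exact hsc u
      _ = M * √(φ₂ u) ^ 2 := by field_simp
  simpa [abs_of_nonneg hs] using convex_univ.norm_image_sub_le_of_norm_hasDerivWithin_le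
    (fun u _ => (hderiv u).hasDerivWithinAt) (fun u _ => hbound u) (mem_univ 0) (mem_univ s)

section Curvature

variable (h₃ : ∀ s, HasDerivAt φ₂ (φ₃ s) s) (hpos : ∀ s, 0 < φ₂ s)
  (hsc : ∀ s, |φ₃ s| ≤ 2 * M * √(φ₂ s) ^ 3) (hr : r = √(φ₂ 0))
include h₃ hpos hsc hr

theorem sq_div_one_add_le (hs : 0 ≤ s) : (r / (1 + M * r * s)) ^ 2 ≤ φ₂ s := by
  have hr0 : 0 < r := hr ▸ Real.sqrt_pos.2 (hpos 0)
  have hψ := (abs_sub_le_iff.1 (abs_inv_sqrt_sub_le h₃ hpos hsc hs)).1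
  have hψpos : 0 < (√(φ₂ s))⁻¹ := inv_pos.2 (Real.sqrt_pos.2 (hpos s))
  have hle : (√(φ₂ s))⁻¹ ≤ (1 + M * r * s) / r := by
    rw [show (1 + M * r * s) / r = r⁻¹ + M * s by field_simp, hr]
    linarith
  have hpos' : 0 < 1 + M * r * s := (div_pos_iff_of_pos_right hr0).1 (hψpos.trans_le hle)
  have := inv_anti₀ hψpos hle
  rw [inv_inv, inv_div] at this
  exact (Real.le_sqrt (by positivity) (hpos s).le).1 this

theorem le_sq_div_one_sub (hs : 0 ≤ s) (hMrs : M * r * s < 1) :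
    φ₂ s ≤ (r / (1 - M * r * s)) ^ 2 := by
  have hr0 : 0 < r := hr ▸ Real.sqrt_pos.2 (hpos 0)
  have hψ := (abs_sub_le_iff.1 (abs_inv_sqrt_sub_le h₃ hpos hsc hs)).2
  have hle : (1 - M * r * s) / r ≤ (√(φ₂ s))⁻¹ := by
    rw [show (1 - M * r * s) / r = r⁻¹ - M * s by field_simp, hr]
    linarith
  have := inv_anti₀ (div_pos (by linarith) hr0) hle
  rw [inv_inv, inv_div] at this
  exact (Real.sqrt_le_left (div_pos hr0 (by linarith)).le).1 this

end Curvature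

section Integration

variable (h₁ : ∀ s, HasDerivAt φ (φ₁ s) s) (h₂ : ∀ s, HasDerivAt φ₁ (φ₂ s) s)
  (h₃ : ∀ s, HasDerivAt φ₂ (φ₃ s) s) (hpos : ∀ s, 0 < φ₂ s)
  (hsc : ∀ s, |φ₃ s| ≤ 2 * M * √(φ₂ s) ^ 3) (hM : 0 < M) (hr : r = √(φ₂ 0))
include h₂ h₃ hpos hsc hM hr

theorem add_div_mul_one_sub_inv_le (hs : 0 ≤ s) :
    φ₁ 0 + r / M * (1 - (1 + M * r * s)⁻¹) ≤ φ₁ s := by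
  have hr0 : 0 < r := hr ▸ Real.sqrt_pos.2 (hpos 0)
  have hderiv : ∀ u ∈ Icc 0 s, HasDerivAt (fun u => φ₁ 0 + r / M * (1 - (1 + M * r * u)⁻¹))
      ((r / (1 + M * r * u)) ^ 2) u := by
    intro u hu
    have hu : 0 < 1 + M * r * u := by have := hu.1; positivity
    refine (((((hasDerivAt_id' u).const_mul (M * r)).const_add 1).inv hu.ne').const_sub 1
      |>.const_mul (r / M) |>.const_add (φ₁ 0)).congr_deriv ?_
    field_simp
  exact le_of_hasDerivAt_le hs hderiv (fun u _ => h₂ u) (by simp)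
    fun u hu => sq_div_one_add_le h₃ hpos hsc hr hu.1

theorem le_add_div_mul_inv_sub_one (hs : 0 ≤ s) (hMrs : M * r * s < 1) :
    φ₁ s ≤ φ₁ 0 + r / M * ((1 - M * r * s)⁻¹ - 1) := by
  have hr0 : 0 < r := hr ▸ Real.sqrt_pos.2 (hpos 0)
  have hMru : ∀ u ∈ Icc 0 s, M * r * u < 1 := fun u hu =>
    (mul_le_mul_of_nonneg_left hu.2 (by positivity)).trans_lt hMrs
  have hderiv : ∀ u ∈ Icc 0 s, HasDerivAt (fun u => φ₁ 0 + r / M * ((1 - M * r * u)⁻¹ - 1))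
      ((r / (1 - M * r * u)) ^ 2) u := by
    intro u hu
    have hu : 1 - M * r * u ≠ 0 := by linarith [hMru u hu]
    refine (((((hasDerivAt_id' u).const_mul (M * r)).const_sub 1).inv hu).sub_const 1
      |>.const_mul (r / M) |>.const_add (φ₁ 0)).congr_deriv ?_
    field_simp
  exact le_of_hasDerivAt_le hs (fun u _ => h₂ u) hderiv (by simp)
    fun u hu => le_sq_div_one_sub h₃ hpos hsc hr hu.1 (hMru u (Ico_subset_Icc_self hu))

include h₁ in
theorem le_add_mul_add_omegaStar_div (hs : 0 ≤ s) (hMrs : M * r * s < 1) :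
    φ s ≤ φ 0 + s * φ₁ 0 + omegaStar (M * r * s) / M ^ 2 := by
  have hr0 : 0 < r := hr ▸ Real.sqrt_pos.2 (hpos 0)
  have hMru : ∀ u ∈ Icc 0 s, M * r * u < 1 := fun u hu =>
    (mul_le_mul_of_nonneg_left hu.2 (by positivity)).trans_lt hMrs
  have hderiv : ∀ u ∈ Icc 0 s,
      HasDerivAt (fun u => φ 0 + u * φ₁ 0 + omegaStar (M * r * u) / M ^ 2)
        (φ₁ 0 + r / M * ((1 - M * r * u)⁻¹ - 1)) u := by
    intro u hu
    have hω := (hasDerivAt_omegaStar (hMru u hu).ne).comp u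
      ((hasDerivAt_id' u).const_mul (M * r))
    refine (((hasDerivAt_id' u).mul_const (φ₁ 0)).const_add (φ 0) |>.add
      (hω.div_const (M ^ 2))).congr_deriv ?_
    field_simp
  exact le_of_hasDerivAt_le hs (fun u _ => h₁ u) hderiv (by simp [omegaStar])
    fun u hu => le_add_div_mul_inv_sub_one h₂ h₃ hpos hsc hM hr hu.1
      (hMru u (Ico_subset_Icc_self hu))

include h₁ in
theorem adaptive_step_bounds {η t : ℝ}
    (hη : η = -φ₁ 0 / r) (hηpos : 0 < η) (ht : t = η / ((1 + M * η) * r)) :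
    φ t ≤ φ 0 - omegaFn (M * η) / M ^ 2 ∧ φ t - φ 0 ≤ 1 / 2 * t * φ₁ 0 ∧
    2 * M * η / (1 + 2 * M * η) * φ₁ 0 ≤ φ₁ t ∧ φ₁ t ≤ 0 := by
  have hr0 : 0 < r := hr ▸ Real.sqrt_pos.2 (hpos 0)
  have hφ₁ : φ₁ 0 = -(η * r) := by rw [hη]; field_simp
  have ht0 : 0 ≤ t := by rw [ht]; positivity
  have hMrt : M * r * t = M * η / (1 + M * η) := by rw [ht]; field_simp
  have hMrt1 : M * r * t < 1 := by
    rw [hMrt, div_lt_one (by positivity)]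
    linarith
  have hupper := le_add_div_mul_inv_sub_one h₂ h₃ hpos hsc hM hr ht0 hMrt1
  have hlower := add_div_mul_one_sub_inv_le h₂ h₃ hpos hsc hM hr ht0
  have hvalue := le_add_mul_add_omegaStar_div h₁ h₂ h₃ hpos hsc hM hr ht0 hMrt1
  have hlog : Real.log (1 - M * η / (1 + M * η)) = -Real.log (1 + M * η) := by
    rw [← Real.log_inv]
    congr 1
    field_simp
    ring
  rw [hMrt] at hupper hlower hvalue
  have hdecrease : φ t ≤ φ 0 - omegaFn (M * η) / M ^ 2 := by
    convert hvalue using 1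
    rw [omegaStar, omegaFn, hlog, ht, hφ₁]
    field_simp
    ring
  refine ⟨hdecrease, ?_, ?_, ?_⟩
  · calc φ t - φ 0 ≤ -(omegaFn (M * η) / M ^ 2) := by linarith
      _ ≤ -((M * η) ^ 2 / (2 * (1 + M * η)) / M ^ 2) := by
        gcongr
        exact sq_div_two_mul_one_add_le_omegaFn (by positivity)
      _ = 1 / 2 * t * φ₁ 0 := by
        rw [ht, hφ₁]
        field_simp
  · convert hlower using 1
    rw [hφ₁]
    field_simp
    ring
  · convert hupper using 1
    rw [hφ₁]
    field_simp
    ring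

end Integration

end SelfConcordantLine

theorem stmt1 {n : ℕ} (f : V n → ℝ) (μ M : ℝ) (hμ : 0 < μ) (hM : 0 < M)
    (hf : ContDiff ℝ 3 f) (hsc : StrongConvex μ f) (hself : SelfConcordant M f)
    (xk dk : V n) (hdesc : dot (gradient f xk) dk < 0)
    (η : ℝ) (hη : η = -(dot (gradient f xk) dk) / wnorm f xk dk)
    (t : ℝ) (ht : t = η / ((1 + M * η) * wnorm f xk dk))
    (x' : V n) (hx' : x' = xk + t • dk) :
    (f x' ≤ f xk - omegaFn (M * η) / M ^ 2) ∧
    (f x' - f xk ≤ (1 / 2) * t * dot (gradient f xk) dk) ∧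
    (2 * M * η / (1 + 2 * M * η) * dot (gradient f xk) dk ≤ dot (gradient f x') dk ∧
      dot (gradient f x') dk ≤ 0) := by
  have hd : dk ≠ 0 := by rintro rfl; simp [dot] at hdesc
  have hline : ∀ k < 3, ∀ s : ℝ,
      HasDerivAt (fun s => iteratedFDeriv ℝ k f (xk + s • dk) fun _ => dk)
        (iteratedFDeriv ℝ (k + 1) f (xk + s • dk) fun _ => dk) s :=
    fun k hk => hasDerivAt_iteratedFDeriv_line hf (by exact_mod_cast hk) xk dk
  have h₁ : ∀ s : ℝ, HasDerivAt (fun s => f (xk + s • dk))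
      (iteratedFDeriv ℝ 1 f (xk + s • dk) fun _ => dk) s := by
    simpa only [iteratedFDeriv_zero_apply] using hline 0 (by norm_num)
  have hhess : ∀ y, 0 < hessQ f y dk := fun y => (by positivity : 0 < μ * ‖dk‖ ^ 2).trans_le
    (hsc.mul_sq_norm_le_hessQ (hf.of_le (by norm_num)) y dk)
  have hself' := fun s : ℝ => hself.abs_iteratedFDeriv_three_le (xk + s • dk) dk (hhess _).le
  simp only [hessQ_eq_iteratedFDeriv] at hhess hself'
  have hgrad : ∀ y, dot (gradient f y) dk = iteratedFDeriv ℝ 1 f y fun _ => dk := fun y => by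
    rw [dot_gradient, iteratedFDeriv_one_apply]
  have hr : wnorm f xk dk = √(iteratedFDeriv ℝ 2 f (xk + (0 : ℝ) • dk) fun _ => dk) := by
    rw [wnorm, hessQ_eq_iteratedFDeriv, zero_smul, add_zero]
  have hηpos : 0 < η := by
    rw [hη]
    exact div_pos (neg_pos.2 hdesc) (hr ▸ Real.sqrt_pos.2 (hhess _))
  obtain ⟨hi, hii, hiii, hiv⟩ := SelfConcordantLine.adaptive_step_bounds h₁
    (hline 1 (by norm_num)) (hline 2 (by norm_num)) (fun _ => hhess _) hself' hM hr
    (by simpa [hgrad] using hη) hηpos ht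
  rw [zero_smul, add_zero] at hi hii hiii
  subst hx'
  simp only [hgrad]
  exact ⟨hi, hii, hiii, hiv⟩
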